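/- arXiv:1108.1303 — 2 statements merged into one kernel-verified Lean document; each statement's English description precedes it below -/
import Mathlib

section
/- Let G be a finite non-abelian group, let p be the smallest prime number dividing the order of G, and let n ≥ 1 be a natural number. Then d_n(G) = (p^{n+1} + p^n − 1)/p^{2n+1} if and only if G/Z(G) is an elementary abelian p-group of rank 2, i.e. G/Z(G) ≅ ℤ_p × ℤ_p. -/
/-!
Write `c_k(H)` for the number of pairwise commuting `k`-tuples in `H`. Counting commuting
`(n + 2)`-tuples by their first entry `x` gives the recurrence
`d_{n+1}(G) = d_n(G) / [G : Z] + ∑_{x ∉ Z} c_{n+1}(C(x)) / |G|^{n+2}`, in which each summand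
`c_{n+1}(C(x)) / |G|^{n+1}` is at most `[G : C(x)]^{-(n+1)} ≤ p^{-(n+1)}`, since a proper subgroup
has index at least `p`. As `G / Z` is not cyclic, `[G : Z] ≥ p ^ 2`. The value
`(p^{n+1} + p^n - 1) / p^{2n+1}` solves the recurrence with `[G : Z] = p ^ 2` and all these
summands equal to `p^{-(n+1)}`, so comparison bounds `d_n(G)` by it, with equality for `n ≥ 1`
only if `[G : Z] = p ^ 2`. Conversely, if `[G : Z] = p ^ 2`, every noncentral centralizer has
index `p` and is abelian (its centre has index dividing `p`), so the recurrence is an equality.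
-/

/-- The multiple commutativity degree `d_n(G)`: the number of `(n+1)`-tuples of
pairwise commuting elements of `G`, divided by `|G|^(n+1)`. -/
noncomputable def multCommDegree (G : Type*) [Group G] (n : ℕ) : ℚ :=
  (Nat.card {f : Fin (n + 1) → G // ∀ i j, Commute (f i) (f j)} : ℚ) /
    (Nat.card G : ℚ) ^ (n + 1)

open Subgroup Finset

def extremalDegree (p : ℚ) (n : ℕ) : ℚ := (p ^ (n + 1) + p ^ n - 1) / p ^ (2 * n + 1)

section Extremal

variable {p : ℚ}

theorem extremalDegree_zero (hp : p ≠ 0) : extremalDegree p 0 = 1 := by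
  simp [extremalDegree, hp]

theorem extremalDegree_succ (hp : p ≠ 0) (n : ℕ) :
    extremalDegree p (n + 1) =
      (p ^ 2)⁻¹ * extremalDegree p n + (1 - (p ^ 2)⁻¹) / p ^ (n + 1) := by
  simp only [extremalDegree]
  field_simp
  ring

theorem inv_pow_lt_extremalDegree (hp : 1 < p) (n : ℕ) :
    1 / p ^ (n + 1) < extremalDegree p n := by
  have hp0 : 0 < p := by linarith
  have : 1 < p ^ (n + 1) := one_lt_pow₀ hp (by omega)
  rw [extremalDegree, div_lt_div_iff₀ (by positivity) (by positivity), one_mul,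
    show p ^ (2 * n + 1) = p ^ n * p ^ (n + 1) by ring]
  exact mul_lt_mul_of_pos_right (by linarith) (by positivity)

variable {z : ℚ} {d : ℕ → ℚ}

theorem le_extremalDegree_of_le (hp : 1 < p) (hz0 : 0 ≤ z) (hz : z ≤ (p ^ 2)⁻¹)
    (h0 : d 0 ≤ 1) (hrec : ∀ m, d (m + 1) ≤ z * d m + (1 - z) / p ^ (m + 1)) (n : ℕ) :
    d n ≤ extremalDegree p n := by
  induction n with
  | zero => rwa [extremalDegree_zero (by positivity)]
  | succ m ih =>
    rw [extremalDegree_succ (by positivity)]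
    calc d (m + 1) ≤ z * d m + (1 - z) / p ^ (m + 1) := hrec m
      _ ≤ z * extremalDegree p m + (1 - z) / p ^ (m + 1) := by gcongr
      _ = 1 / p ^ (m + 1) + z * (extremalDegree p m - 1 / p ^ (m + 1)) := by ring
      _ ≤ 1 / p ^ (m + 1) + (p ^ 2)⁻¹ * (extremalDegree p m - 1 / p ^ (m + 1)) := by
        gcongr
        exact sub_nonneg.2 (inv_pow_lt_extremalDegree hp m).le
      _ = _ := by ring

theorem eq_inv_sq_of_eq_extremalDegree (hp : 1 < p) (hz0 : 0 ≤ z) (hz : z ≤ (p ^ 2)⁻¹)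
    (h0 : d 0 ≤ 1) (hrec : ∀ m, d (m + 1) ≤ z * d m + (1 - z) / p ^ (m + 1)) {m : ℕ}
    (heq : d (m + 1) = extremalDegree p (m + 1)) : z = (p ^ 2)⁻¹ := by
  have hgap := inv_pow_lt_extremalDegree hp m
  have key : (p ^ 2)⁻¹ * (extremalDegree p m - 1 / p ^ (m + 1)) ≤
      z * (extremalDegree p m - 1 / p ^ (m + 1)) := by
    calc _ = extremalDegree p (m + 1) - 1 / p ^ (m + 1) := by
          rw [extremalDegree_succ (by positivity)]; ring
      _ ≤ z * d m + (1 - z) / p ^ (m + 1) - 1 / p ^ (m + 1) := by rw [← heq]; linarith [hrec m]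
      _ ≤ z * extremalDegree p m + (1 - z) / p ^ (m + 1) - 1 / p ^ (m + 1) := by
          gcongr; exact le_extremalDegree_of_le hp hz0 hz h0 hrec m
      _ = _ := by ring
  exact hz.antisymm (le_of_mul_le_mul_right key (by linarith))

theorem eq_extremalDegree_of_eq (hp : p ≠ 0) (h0 : d 0 = 1)
    (hrec : ∀ m, d (m + 1) = (p ^ 2)⁻¹ * d m + (1 - (p ^ 2)⁻¹) / p ^ (m + 1)) (n : ℕ) :
    d n = extremalDegree p n := by
  induction n with
  | zero => rw [h0, extremalDegree_zero hp]
  | succ m ih => rw [hrec, ih, extremalDegree_succ hp]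

end Extremal

abbrev CommTuple (G : Type*) [Group G] (m : ℕ) : Type _ :=
  {f : Fin m → G // ∀ i j, Commute (f i) (f j)}

namespace CommTuple

variable {G H : Type*} [Group G] [Group H]

def congr (e : G ≃* H) (m : ℕ) : CommTuple G m ≃ CommTuple H m where
  toFun f := ⟨fun i => e (f.1 i), fun i j => (f.2 i j).map e⟩
  invFun f := ⟨fun i => e.symm (f.1 i), fun i j => (f.2 i j).map e.symm⟩
  left_inv _ := Subtype.ext (funext fun _ => e.symm_apply_apply _)
  right_inv _ := Subtype.ext (funext fun _ => e.apply_symm_apply _)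

def succEquiv (G : Type*) [Group G] (m : ℕ) :
    CommTuple G (m + 1) ≃ Σ x : G, CommTuple (centralizer {x}) m where
  toFun f := ⟨f.1 0, fun i => ⟨f.1 i.succ, mem_centralizer_singleton_iff.2 (f.2 _ _)⟩,
    fun i j => Subtype.ext (f.2 _ _)⟩
  invFun s := ⟨Fin.cons s.1 fun i => s.2.1 i, by
    have hx : ∀ i, Commute s.1 (s.2.1 i) := fun i =>
      (mem_centralizer_singleton_iff.1 (s.2.1 i).2).symm
    simp only [Fin.forall_fin_succ, Fin.cons_zero, Fin.cons_succ]
    exact ⟨⟨Commute.refl _, hx⟩,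
      fun i => ⟨(hx i).symm, fun j => congrArg Subtype.val (s.2.2 i j)⟩⟩⟩
  left_inv f := Subtype.ext (Fin.cons_self_tail f.1)
  right_inv s := rfl

theorem card_le_pow [Finite G] (m : ℕ) : Nat.card (CommTuple G m) ≤ Nat.card G ^ m := by
  simpa only [Nat.card_fun, Nat.card_fin] using
    Finite.card_subtype_le fun f : Fin m → G => ∀ i j, Commute (f i) (f j)

theorem card_eq_pow [IsMulCommutative G] (m : ℕ) : Nat.card (CommTuple G m) = Nat.card G ^ m := by
  rw [Nat.card_congr (Equiv.subtypeUnivEquiv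
      (p := fun f : Fin m → G => ∀ i j, Commute (f i) (f j))
      fun f i j => isMulCommutative_iff.1 ‹_› (f i) (f j)), Nat.card_fun, Nat.card_fin]

theorem card_one : Nat.card (CommTuple G 1) = Nat.card G :=
  Nat.card_congr ⟨fun f => f.1 0, fun x => ⟨fun _ => x, fun _ _ => Commute.refl x⟩,
    fun f => Subtype.ext (funext fun i => by rw [Subsingleton.elim i 0]), fun _ => rfl⟩

theorem card_succ [Fintype G] (m : ℕ) :
    Nat.card (CommTuple G (m + 1)) = ∑ x : G, Nat.card (CommTuple (centralizer {x}) m) := by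
  rw [Nat.card_congr (succEquiv G m), Nat.card_sigma]

theorem card_succ_eq_center_add [Fintype G] [DecidablePred (· ∈ center G)] (m : ℕ) :
    Nat.card (CommTuple G (m + 1)) = Nat.card (center G) * Nat.card (CommTuple G m) +
      ∑ x ∈ univ.filter (· ∉ center G), Nat.card (CommTuple (centralizer {x}) m) := by
  rw [card_succ, ← sum_filter_add_sum_filter_not univ (· ∈ center G)]
  congr 1
  rw [sum_congr rfl fun x hx => ?_, sum_const, smul_eq_mul]
  · congr 1
    rw [Nat.card_eq_fintype_card, Fintype.card_subtype]
  · rw [(centralizer_eq_top_iff_subset.2 (Set.singleton_subset_iff.2 (mem_filter.1 hx).2)),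
      Nat.card_congr (congr topEquiv m)]

end CommTuple

theorem Subgroup.card_div_card_eq_inv_index {G : Type*} [Group G] [Finite G] (K : Subgroup G) :
    (Nat.card K : ℚ) / Nat.card G = (K.index : ℚ)⁻¹ := by
  rw [← K.card_mul_index, Nat.cast_mul,
    div_mul_cancel_left₀ (by exact_mod_cast Nat.card_pos.ne')]

section Density

variable {G : Type*} [Group G]

theorem multCommDegree_zero [Finite G] : multCommDegree G 0 = 1 := by
  rw [multCommDegree, ← CommTuple, CommTuple.card_one, pow_one,
    div_self (by exact_mod_cast Nat.card_pos.ne')]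

theorem card_commTuple_div_pow_le [Finite G] (K : Subgroup G) (k : ℕ) :
    (Nat.card (CommTuple K k) : ℚ) / Nat.card G ^ k ≤ (K.index : ℚ)⁻¹ ^ k := by
  rw [← K.card_div_card_eq_inv_index, div_pow]
  gcongr
  exact_mod_cast CommTuple.card_le_pow k

theorem card_commTuple_div_pow_eq [Finite G] (K : Subgroup G) [IsMulCommutative K] (k : ℕ) :
    (Nat.card (CommTuple K k) : ℚ) / Nat.card G ^ k = (K.index : ℚ)⁻¹ ^ k := by
  rw [← K.card_div_card_eq_inv_index, div_pow, CommTuple.card_eq_pow, Nat.cast_pow]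

variable [Fintype G] [DecidablePred (· ∈ center G)]

theorem card_filter_not_mem_center_div_card :
    (#(univ.filter (· ∉ center G)) : ℚ) / Nat.card G = 1 - ((center G).index : ℚ)⁻¹ := by
  have h := card_filter_add_card_filter_not (s := univ) (· ∈ center G)
  rw [card_univ, ← Fintype.card_subtype, ← Nat.card_eq_fintype_card,
    ← Nat.card_eq_fintype_card] at h
  rw [← (center G).card_div_card_eq_inv_index, eq_sub_iff_add_eq, ← add_div, ← Nat.cast_add,
    add_comm, h, div_self (by exact_mod_cast Nat.card_pos.ne')]

theorem multCommDegree_succ (m : ℕ) :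
    multCommDegree G (m + 1) = ((center G).index : ℚ)⁻¹ * multCommDegree G m +
      (∑ x ∈ univ.filter (· ∉ center G),
        (Nat.card (CommTuple (centralizer {x}) (m + 1)) : ℚ) / Nat.card G ^ (m + 1)) /
          Nat.card G := by
  rw [multCommDegree, multCommDegree, ← CommTuple, ← CommTuple,
    CommTuple.card_succ_eq_center_add, ← (center G).card_div_card_eq_inv_index, ← sum_div]
  push_cast
  field_simp
  ring

theorem multCommDegree_succ_le {p : ℕ} (hp : 0 < p)
    (hC : ∀ x ∉ center G, p ≤ (centralizer {x}).index) (m : ℕ) :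
    multCommDegree G (m + 1) ≤ ((center G).index : ℚ)⁻¹ * multCommDegree G m +
      (1 - ((center G).index : ℚ)⁻¹) / p ^ (m + 1) := by
  have hS : ∑ x ∈ univ.filter (· ∉ center G),
      (Nat.card (CommTuple (centralizer {x}) (m + 1)) : ℚ) / Nat.card G ^ (m + 1) ≤
        #(univ.filter (· ∉ center G)) * (p : ℚ)⁻¹ ^ (m + 1) := by
    rw [← nsmul_eq_mul]
    refine sum_le_card_nsmul _ _ _ fun x hx => (card_commTuple_div_pow_le _ _).trans ?_
    gcongr
    exact_mod_cast hC x (mem_filter.1 hx).2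
  rw [multCommDegree_succ, ← card_filter_not_mem_center_div_card]
  calc _ ≤ ((center G).index : ℚ)⁻¹ * multCommDegree G m +
        #(univ.filter (· ∉ center G)) * (p : ℚ)⁻¹ ^ (m + 1) / Nat.card G := by gcongr
    _ = _ := by ring

theorem multCommDegree_succ_eq {p : ℕ}
    (hC : ∀ x ∉ center G, (centralizer {x}).index = p ∧ IsMulCommutative (centralizer {x}))
    (m : ℕ) :
    multCommDegree G (m + 1) = ((center G).index : ℚ)⁻¹ * multCommDegree G m +
      (1 - ((center G).index : ℚ)⁻¹) / p ^ (m + 1) := by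
  have hS : ∑ x ∈ univ.filter (· ∉ center G),
      (Nat.card (CommTuple (centralizer {x}) (m + 1)) : ℚ) / Nat.card G ^ (m + 1) =
        #(univ.filter (· ∉ center G)) * (p : ℚ)⁻¹ ^ (m + 1) := by
    rw [← nsmul_eq_mul, ← sum_const]
    refine sum_congr rfl fun x hx => ?_
    obtain ⟨hindex, _⟩ := hC x (mem_filter.1 hx).2
    rw [card_commTuple_div_pow_eq, hindex]
  rw [multCommDegree_succ, hS, ← card_filter_not_mem_center_div_card]
  ring

end Density

section GroupTheory

variable {G : Type*} [Group G] {p : ℕ}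

theorem isMulCommutative_of_relIndex_center_prime {K : Subgroup G}
    (hK : ((center G).relIndex K).Prime) : IsMulCommutative K := by
  have := Fact.mk hK
  have hle : (center G).subgroupOf K ≤ center K := fun a ha =>
    mem_center_iff.2 fun b => Subtype.ext (mem_center_iff.1 (mem_subgroupOf.1 ha) b)
  have := isCyclic_of_card_dvd_prime (α := K ⧸ center K) (p := (center G).relIndex K)
    (by rw [← index_eq_card]; exact index_dvd_of_le hle)
  exact isMulCommutative_of_isCyclic_quotient_center_self K

theorem index_centralizer_of_index_center_eq_sq (hp : p.Prime)
    (hZ : (center G).index = p ^ 2) {x : G} (hx : x ∉ center G) :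
    (centralizer {x}).index = p := by
  have hrel := relIndex_mul_index (center_le_centralizer {x})
  obtain ⟨i, hi, hindex⟩ := (Nat.dvd_prime_pow hp).1 (hZ ▸ Dvd.intro_left _ hrel)
  have hxC : x ∈ centralizer {x} := mem_centralizer_singleton_iff.2 rfl
  interval_cases i
  · exact absurd (by simpa using hindex) hx
  · simpa using hindex
  · rw [hindex, hZ, Nat.mul_eq_right (pow_pos hp.pos 2).ne'] at hrel
    exact absurd (relIndex_eq_one.1 hrel hxC) hx

theorem isMulCommutative_centralizer_of_index_center_eq_sq (hp : p.Prime)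
    (hZ : (center G).index = p ^ 2) {x : G} (hx : x ∉ center G) :
    IsMulCommutative (centralizer {x}) := by
  have hrel := relIndex_mul_index (center_le_centralizer {x})
  rw [index_centralizer_of_index_center_eq_sq hp hZ hx, hZ, sq] at hrel
  exact isMulCommutative_of_relIndex_center_prime (Nat.eq_of_mul_eq_mul_right hp.pos hrel ▸ hp)

variable [Finite G]

theorem le_index_of_ne_top (hmin : ∀ q : ℕ, q.Prime → q ∣ Nat.card G → p ≤ q)
    {H : Subgroup G} (hH : H ≠ ⊤) : p ≤ H.index := by
  have hq := Nat.minFac_prime (mt index_eq_one.1 hH)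
  exact (hmin _ hq ((Nat.minFac_dvd _).trans H.index_dvd_card)).trans
    (Nat.minFac_le (Nat.pos_of_ne_zero index_ne_zero_of_finite))

/-- The index of the center is neither `1` nor a prime, since `G / Z(G)` is not cyclic. -/
theorem sq_le_index_center (hmin : ∀ q : ℕ, q.Prime → q ∣ Nat.card G → p ≤ q)
    (hG : ¬ IsMulCommutative G) : p ^ 2 ≤ (center G).index := by
  have hne : (center G).index ≠ 1 := by rwa [Ne, index_eq_one, center_eq_top_iff]
  have hnp : ¬ (center G).index.Prime := fun hprime => by
    have := Fact.mk hprime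
    have := isCyclic_of_prime_card (α := G ⧸ center G) (index_eq_card _).symm
    exact hG (isMulCommutative_of_isCyclic_quotient_center_self G)
  calc p ^ 2 ≤ (center G).index.minFac ^ 2 := by
        gcongr
        exact hmin _ (Nat.minFac_prime hne) ((Nat.minFac_dvd _).trans (index_dvd_card _))
    _ ≤ (center G).index := Nat.minFac_sq_le_self (Nat.pos_of_ne_zero index_ne_zero_of_finite) hnp

end GroupTheory

theorem pow_eq_one_of_card_eq_sq_of_not_isCyclic {Q : Type*} [Group Q] {p : ℕ} (hp : p.Prime)
    (hQ : Nat.card Q = p ^ 2) (hQc : ¬ IsCyclic Q) (x : Q) : x ^ p = 1 := by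
  obtain ⟨i, hi, hx⟩ := (Nat.dvd_prime_pow hp).1 (hQ ▸ orderOf_dvd_natCard x)
  interval_cases i
  · simp [orderOf_eq_one_iff.1 (by simpa using hx)]
  · exact orderOf_dvd_iff_pow_eq_one.1 (by rw [hx, pow_one])
  · have : Finite Q := Nat.finite_of_card_ne_zero (by simp [hQ, hp.ne_zero])
    exact absurd (isCyclic_of_orderOf_eq_card x (by rw [hx, hQ])) hQc

theorem nonempty_mulEquiv_prod_of_card_eq_sq {Q : Type*} [Group Q] {p : ℕ} (hp : p.Prime)
    (hQ : Nat.card Q = p ^ 2) (hQc : ¬ IsCyclic Q) :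
    Nonempty (Q ≃* Multiplicative (ZMod p) × Multiplicative (ZMod p)) := by
  have := Fact.mk hp
  have : Finite Q := Nat.finite_of_card_ne_zero (by simp [hQ, hp.ne_zero])
  let := IsPGroup.commGroupOfCardEqPrimeSq hQ
  let := AddCommGroup.zmodModule (G := Additive Q) (n := p) fun x =>
    pow_eq_one_of_card_eq_sq_of_not_isCyclic hp hQ hQc x.toMul
  have : Module.Finite (ZMod p) (Additive Q) := Module.Finite.of_finite
  have := Fintype.ofFinite (Additive Q)
  have hrank : Module.finrank (ZMod p) (Additive Q) =
      Module.finrank (ZMod p) (ZMod p × ZMod p) := by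
    have h := Module.card_eq_pow_finrank (K := ZMod p) (V := Additive Q)
    rw [← Nat.card_eq_fintype_card, ZMod.card] at h
    rw [Module.finrank_prod, Module.finrank_self]
    exact Nat.pow_right_injective hp.two_le (h.symm.trans hQ)
  exact ⟨(AddEquiv.toMultiplicativeRight (LinearEquiv.ofFinrankEq _ _ hrank).toAddEquiv).trans
    (MulEquiv.prodMultiplicative _ _)⟩

theorem nonempty_mulEquiv_quotient_center_iff {G : Type*} [Group G] {p : ℕ} (hp : p.Prime)
    (hG : ¬ IsMulCommutative G) :
    Nonempty (G ⧸ center G ≃* Multiplicative (ZMod p) × Multiplicative (ZMod p)) ↔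
      (center G).index = p ^ 2 := by
  refine ⟨fun ⟨e⟩ => ?_, fun hZ => nonempty_mulEquiv_prod_of_card_eq_sq hp
    ((index_eq_card (center G)).symm.trans hZ)
    fun _ => hG (isMulCommutative_of_isCyclic_quotient_center_self G)⟩
  have := Fact.mk hp
  rw [index_eq_card, Nat.card_congr e.toEquiv, Nat.card_prod, Nat.card_congr Multiplicative.toAdd,
    Nat.card_zmod, sq]

theorem multCommDegree_eq_iff_quotient_center_general (G : Type*) [Group G] [Finite G]
    (hna : ¬ ∀ a b : G, a * b = b * a)
    (p : ℕ) (hp : p.Prime)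
    (hmin : ∀ q : ℕ, q.Prime → q ∣ Nat.card G → p ≤ q)
    (n : ℕ) (hn : 1 ≤ n) :
    multCommDegree G n = ((p : ℚ) ^ (n + 1) + (p : ℚ) ^ n - 1) / (p : ℚ) ^ (2 * n + 1) ↔
      Nonempty ((G ⧸ Subgroup.center G) ≃*
        (Multiplicative (ZMod p) × Multiplicative (ZMod p))) := by
  classical
  have := Fintype.ofFinite G
  have hG : ¬ IsMulCommutative G := by rwa [isMulCommutative_iff]
  have hp1 : (1 : ℚ) < p := by exact_mod_cast hp.one_lt
  change multCommDegree G n = extremalDegree p n ↔ _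
  rw [nonempty_mulEquiv_quotient_center_iff hp hG]
  constructor
  · intro h
    obtain ⟨m, rfl⟩ := Nat.exists_eq_add_of_le' hn
    have hC : ∀ x ∉ center G, p ≤ (centralizer {x}).index := fun x hx =>
      le_index_of_ne_top hmin fun h => hx (centralizer_eq_top_iff_subset.1 h rfl)
    have hZ : ((center G).index : ℚ)⁻¹ ≤ ((p : ℚ) ^ 2)⁻¹ := by
      gcongr
      exact_mod_cast sq_le_index_center hmin hG
    have := eq_inv_sq_of_eq_extremalDegree hp1 (by positivity) hZ multCommDegree_zero.le
      (multCommDegree_succ_le hp.pos hC) h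
    exact_mod_cast inv_injective this
  · intro hZ
    refine eq_extremalDegree_of_eq (by positivity) multCommDegree_zero (fun m => ?_) n
    have := multCommDegree_succ_eq (G := G) (fun x hx =>
      ⟨index_centralizer_of_index_center_eq_sq hp hZ hx,
        isMulCommutative_centralizer_of_index_center_eq_sq hp hZ hx⟩) m
    rwa [hZ, Nat.cast_pow] at this

theorem multCommDegree_eq_iff_quotient_center (G : Type*) [Group G] [Finite G]
    (hna : ¬ ∀ a b : G, a * b = b * a)
    (p : ℕ) (hp : p.Prime) (hdvd : p ∣ Nat.card G)
    (hmin : ∀ q : ℕ, q.Prime → q ∣ Nat.card G → p ≤ q)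
    (n : ℕ) (hn : 1 ≤ n) :
    multCommDegree G n = ((p : ℚ) ^ (n + 1) + (p : ℚ) ^ n - 1) / (p : ℚ) ^ (2 * n + 1) ↔
      Nonempty ((G ⧸ Subgroup.center G) ≃*
        (Multiplicative (ZMod p) × Multiplicative (ZMod p))) :=
  multCommDegree_eq_iff_quotient_center_general G hna p hp hmin n hn
end

section
/- Let n ≥ 1 be a natural number and let Q_n = ⟨a, b | a^n = b^2 = (ab)^2⟩ denote the generalized quaternion (dicyclic) group of order 4n. Then for every natural number m ≥ 1, d_m(Q_n) = (n^m + 2^{m+1} − 1)/(2·(2n)^m). -/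
open Subgroup Finset

abbrev CommutingTuples (G : Type*) [Group G] (k : ℕ) : Type _ :=
  {f : Fin k → G // ∀ i j, Commute (f i) (f j)}

section CommutingTuples

variable {G : Type*} [Group G]

def commutingTuplesSuccEquiv (k : ℕ) :
    CommutingTuples G (k + 1) ≃ Σ g : G, CommutingTuples (centralizer {g}) k where
  toFun f := ⟨f.1 0, fun i => ⟨f.1 i.succ, mem_centralizer_singleton_iff.2 (f.2 _ _)⟩,
    fun _ _ => Submonoid.commute_coe_coe.1 (f.2 _ _)⟩
  invFun t := ⟨Fin.cons t.1 fun i => t.2.1 i, by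
    intro i j
    induction i using Fin.cases <;> induction j using Fin.cases <;>
      simp only [Fin.cons_zero, Fin.cons_succ]
    · exact Commute.refl _
    · exact (mem_centralizer_singleton_iff.1 (t.2.1 _).2).symm
    · exact mem_centralizer_singleton_iff.1 (t.2.1 _).2
    · exact Submonoid.commute_coe_coe.2 (t.2.2 _ _)⟩
  left_inv f := Subtype.ext (Fin.cons_self_tail f.1)
  right_inv _ := rfl

theorem card_commutingTuples_succ [Fintype G] (k : ℕ) :
    Nat.card (CommutingTuples G (k + 1)) =
      ∑ g : G, Nat.card (CommutingTuples (centralizer {g}) k) := by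
  rw [Nat.card_congr (commutingTuplesSuccEquiv k), Nat.card_sigma]

theorem card_commutingTuples_of_isMulCommutative [Finite G] [IsMulCommutative G] (k : ℕ) :
    Nat.card (CommutingTuples G k) = Nat.card G ^ k := by
  rw [Nat.card_congr (Equiv.subtypeUnivEquiv (p := fun f : Fin k → G => ∀ i j, Commute (f i) (f j))
    fun f i j => isMulCommutative_iff.1 ‹_› (f i) (f j)), Nat.card_fun, Nat.card_fin]

theorem card_commutingTuples_centralizer_of_mem_center {g : G} (hg : g ∈ center G) (k : ℕ) :
    Nat.card (CommutingTuples (centralizer {g}) k) = Nat.card (CommutingTuples G k) := by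
  rw [centralizer_eq_top_iff_subset.2 (Set.singleton_subset_iff.2 hg)]
  refine Nat.card_congr (Equiv.subtypeEquiv (Equiv.piCongrRight fun _ => topEquiv.toEquiv) ?_)
  exact fun f => forall₂_congr fun i j => (commute_map_iff topEquiv.injective).symm

end CommutingTuples

namespace ZMod

variable {n : ℕ} [NeZero n]

theorem add_self_eq_zero_iff {x : ZMod (2 * n)} : x + x = 0 ↔ x = 0 ∨ x = n := by
  refine ⟨fun h => ?_, ?_⟩
  · rw [← natCast_zmod_val x, ← Nat.cast_add, natCast_eq_zero_iff] at h
    obtain ⟨c, hc⟩ := h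
    have hlt := val_lt x
    obtain rfl | rfl : c = 0 ∨ c = 1 := by
      have : c < 2 := by nlinarith
      omega
    · exact Or.inl ((val_eq_zero x).1 (by omega))
    · exact Or.inr (by rw [← natCast_zmod_val x, show x.val = n by omega])
  · rintro (rfl | rfl)
    · exact add_zero 0
    · rw [← Nat.cast_add, ← two_mul, natCast_self]

theorem card_filter_add_self_eq_zero : #{x : ZMod (2 * n) | x + x = 0} = 2 := by
  have hn : (n : ZMod (2 * n)) ≠ 0 := by
    rw [Ne, natCast_eq_zero_iff]
    exact Nat.not_dvd_of_pos_of_lt (Nat.pos_of_neZero n)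
      (by have := Nat.pos_of_neZero n; omega)
  rw [show ({x : ZMod (2 * n) | x + x = 0} : Finset _) = {0, (n : ZMod (2 * n))} by
    ext; simp [add_self_eq_zero_iff]]
  exact card_pair hn.symm

end ZMod

namespace QuaternionGroup

section Commute

variable {n : ℕ}

theorem commute_a_a (i j : ZMod (2 * n)) : Commute (a i) (a j) := by
  rw [commute_iff_eq, a_mul_a, a_mul_a, add_comm]

theorem commute_a_xa_iff {i j : ZMod (2 * n)} : Commute (a i) (xa j) ↔ i + i = 0 := by
  rw [commute_iff_eq, a_mul_xa, xa_mul_a, xa.injEq]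
  constructor <;> intro h <;> linear_combination -h

theorem commute_xa_a_iff {i j : ZMod (2 * n)} : Commute (xa j) (a i) ↔ i + i = 0 :=
  Commute.symm_iff.trans commute_a_xa_iff

theorem commute_xa_xa_iff {i j : ZMod (2 * n)} :
    Commute (xa i) (xa j) ↔ (j - i) + (j - i) = 0 := by
  rw [commute_iff_eq, xa_mul_xa, xa_mul_xa, a.injEq]
  constructor <;> intro h <;> linear_combination h

theorem a_mem_center {i : ZMod (2 * n)} (hi : i + i = 0) : a i ∈ center (QuaternionGroup n) := by
  rw [mem_center_iff]
  rintro (j | j)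
  · exact commute_a_a j i
  · exact commute_xa_a_iff.2 hi

theorem isMulCommutative_centralizer_a {i : ZMod (2 * n)} (hi : i + i ≠ 0) :
    IsMulCommutative (centralizer {a i}) := by
  refine IsMulCommutative.of_comm fun ⟨x, hx⟩ ⟨y, hy⟩ => Subtype.ext ?_
  rw [mem_centralizer_singleton_iff, ← commute_iff_eq] at hx hy
  rcases x with j | j <;> rcases y with l | l
  · exact commute_a_a j l
  all_goals simp_all [commute_xa_a_iff]

theorem isMulCommutative_centralizer_xa (i : ZMod (2 * n)) :
    IsMulCommutative (centralizer {xa i}) := by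
  refine IsMulCommutative.of_comm fun ⟨x, hx⟩ ⟨y, hy⟩ => Subtype.ext ?_
  rw [mem_centralizer_singleton_iff, ← commute_iff_eq] at hx hy
  rcases x with j | j
  · exact (mem_center_iff.1 (a_mem_center (commute_a_xa_iff.1 hx)) y).symm
  rcases y with l | l
  · exact mem_center_iff.1 (a_mem_center (commute_a_xa_iff.1 hy)) (xa j)
  · rw [commute_xa_xa_iff] at hx hy
    exact commute_xa_xa_iff.2 (by linear_combination hx - hy)

end Commute

def sumEquiv {n : ℕ} : ZMod (2 * n) ⊕ ZMod (2 * n) ≃ QuaternionGroup n where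
  toFun := Sum.elim a xa
  invFun
    | a i => .inl i
    | xa i => .inr i
  left_inv := by rintro (_ | _) <;> rfl
  right_inv := by rintro (_ | _) <;> rfl

section Counting

variable {n : ℕ} [NeZero n]

theorem sum_univ {M : Type*} [AddCommMonoid M] (f : QuaternionGroup n → M) :
    ∑ g, f g = ∑ i, f (a i) + ∑ i, f (xa i) :=
  (Fintype.sum_equiv sumEquiv _ f fun _ => rfl).symm.trans (Fintype.sum_sum_type _)

theorem card_centralizer_a {i : ZMod (2 * n)} (hi : i + i ≠ 0) :
    Nat.card (centralizer {a i}) = 2 * n := by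
  classical
  rw [Nat.card_eq_fintype_card, Fintype.card_subtype, card_filter, sum_univ]
  simp only [mem_centralizer_singleton_iff, ← commute_iff_eq, commute_a_a, commute_xa_a_iff, hi]
  simp

theorem card_centralizer_xa (i : ZMod (2 * n)) : Nat.card (centralizer {xa i}) = 4 := by
  classical
  have hshift : ∑ j : ZMod (2 * n), (if (i - j) + (i - j) = 0 then 1 else 0) =
      ∑ j : ZMod (2 * n), (if j + j = 0 then 1 else 0) :=
    Fintype.sum_equiv (Equiv.subLeft i) _ _ fun _ => rfl
  rw [Nat.card_eq_fintype_card, Fintype.card_subtype, card_filter, sum_univ]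
  simp only [mem_centralizer_singleton_iff, ← commute_iff_eq, commute_a_xa_iff, commute_xa_xa_iff]
  rw [hshift, sum_boole, ZMod.card_filter_add_self_eq_zero]
  rfl

-- The recursion and its solution are stated additively, avoiding truncated subtraction in `ℕ`.
theorem card_commutingTuples_succ_add (k : ℕ) :
    Nat.card (CommutingTuples (QuaternionGroup n) (k + 1)) + 2 * (2 * n) ^ k =
      2 * Nat.card (CommutingTuples (QuaternionGroup n) k) + 2 * n * (2 * n) ^ k +
        2 * n * 4 ^ k := by
  have hcard_a (i : ZMod (2 * n)) : Nat.card (CommutingTuples (centralizer {a i}) k) =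
      if i + i = 0 then Nat.card (CommutingTuples (QuaternionGroup n) k) else (2 * n) ^ k := by
    split_ifs with hi
    · exact card_commutingTuples_centralizer_of_mem_center (a_mem_center hi) k
    · have := isMulCommutative_centralizer_a hi
      rw [card_commutingTuples_of_isMulCommutative, card_centralizer_a hi]
  have hcard_xa (i : ZMod (2 * n)) :
      Nat.card (CommutingTuples (centralizer {xa i}) k) = 4 ^ k := by
    have := isMulCommutative_centralizer_xa i
    rw [card_commutingTuples_of_isMulCommutative, card_centralizer_xa]
  have hsplit := card_filter_add_card_filter_not (s := (univ : Finset (ZMod (2 * n))))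
    (fun i => i + i = 0)
  rw [ZMod.card_filter_add_self_eq_zero, card_univ, ZMod.card] at hsplit
  have hsplit_mul : (2 + #{i : ZMod (2 * n) | ¬i + i = 0}) * (2 * n) ^ k =
      2 * n * (2 * n) ^ k := by
    rw [hsplit]
  rw [card_commutingTuples_succ, sum_univ]
  simp only [hcard_a, hcard_xa, sum_ite, sum_const, smul_eq_mul, card_univ, ZMod.card,
    ZMod.card_filter_add_self_eq_zero]
  linarith

theorem card_commutingTuples_add (k : ℕ) :
    Nat.card (CommutingTuples (QuaternionGroup n) k) + n * 2 ^ k = (2 * n) ^ k + n * 4 ^ k := by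
  induction k with
  | zero => simp
  | succ k ih =>
    have := card_commutingTuples_succ_add (n := n) k
    rw [pow_succ, pow_succ, pow_succ]
    linarith

end Counting

end QuaternionGroup

theorem multCommDegree_quaternionGroup_general (n : ℕ) (hn : 1 ≤ n) (m : ℕ) :
    multCommDegree (QuaternionGroup n) m =
      ((n : ℚ) ^ m + 2 ^ (m + 1) - 1) / (2 * (2 * (n : ℚ)) ^ m) := by
  have : NeZero n := ⟨by omega⟩
  have hcount : (Nat.card (CommutingTuples (QuaternionGroup n) (m + 1)) : ℚ) =
      (2 * n) ^ (m + 1) + n * 4 ^ (m + 1) - n * 2 ^ (m + 1) := by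
    rw [eq_sub_iff_add_eq]
    exact_mod_cast QuaternionGroup.card_commutingTuples_add (m + 1)
  have hcard : Nat.card (QuaternionGroup n) = 4 * n := by
    rw [Nat.card_eq_fintype_card, QuaternionGroup.card]
  have hn0 : (0 : ℚ) < n := by exact_mod_cast hn
  rw [multCommDegree, hcard, hcount, div_eq_div_iff (by positivity) (by positivity)]
  push_cast
  rw [show (4 : ℚ) = 2 * 2 by norm_num]
  simp only [mul_pow]
  ring

theorem multCommDegree_quaternionGroup (n : ℕ) (hn : 1 ≤ n) (m : ℕ) (hm : 1 ≤ m) :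
    multCommDegree (QuaternionGroup n) m =
      ((n : ℚ) ^ m + 2 ^ (m + 1) - 1) / (2 * (2 * (n : ℚ)) ^ m) :=
  multCommDegree_quaternionGroup_general n hn m
end
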